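/- For k ≥ 1, let S = ℕ, S₀ = {1,…,k}, and τ(i) = i+1 for i ∈ S₀ (the shift). Then the supremum over all measurable f : [0,1]^{S₀} → [0,1] of the product Lebesgue measure of {x ∈ [0,1]^ℕ : f(x₁,…,x_k) > f(x₂,…,x_{k+1})} equals 1 − 1/(k+1). -/

import Mathlib

open MeasureTheory unitInterval ENNReal Set

namespace Stmt3Aux

variable {k n : ℕ}

/-- integer key: `k * (min of e) + (first argmin position)`. -/
noncomputable def keyN (k : ℕ) (e : Fin k → ℕ) : ℕ :=
  k * sInf (Set.range e) + sInf {p : ℕ | ∃ h : p < k, e ⟨p, h⟩ = sInf (Set.range e)}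

noncomputable def gfun (k n : ℕ) (e : Fin k → ℕ) : I :=
  ⟨min ((keyN k e : ℝ) / (k * (n + 1))) 1, le_min (by positivity) zero_le_one, min_le_right _ _⟩

noncomputable def fA (k n : ℕ) (W : Fin k → I) : I :=
  gfun k n fun i => ⌊(n : ℝ) * (W i : ℝ)⌋₊

lemma measurable_fA (k n : ℕ) : Measurable (fA k n) := by
  haveI : MeasurableSingletonClass (Fin k → ℕ) := by
    refine ⟨fun f => ?_⟩
    have : ({f} : Set (Fin k → ℕ)) = ⋂ i, (fun g : Fin k → ℕ => g i) ⁻¹' {f i} := by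
      ext g; simp [funext_iff]
    rw [this]
    exact MeasurableSet.iInter fun i => measurable_pi_apply i (measurableSet_singleton _)
  exact (measurable_of_countable (gfun k n)).comp
    (measurable_pi_lambda _ fun i =>
      (measurable_const.mul (measurable_subtype_coe.comp (measurable_pi_apply i))).nat_floor)

lemma sInf_range_eq (e : Fin k → ℕ) (p : Fin k) (hp : ∀ i, e p ≤ e i) :
    sInf (Set.range e) = e p :=
  le_antisymm (Nat.sInf_le ⟨p, rfl⟩)
    (le_csInf ⟨e p, p, rfl⟩ (by rintro b ⟨i, rfl⟩; exact hp i))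

lemma keyN_eq (e : Fin k → ℕ) (p : Fin k) (hp : ∀ i, i ≠ p → e p < e i) :
    keyN k e = k * e p + p.1 := by
  have hple : ∀ i, e p ≤ e i := by
    intro i; by_cases h : i = p
    · simp [h]
    · exact (hp i h).le
  have hr : sInf (Set.range e) = e p := sInf_range_eq e p hple
  have hset : {q : ℕ | ∃ h : q < k, e ⟨q, h⟩ = sInf (Set.range e)} = {(p.1 : ℕ)} := by
    ext q
    constructor
    · rintro ⟨h, he⟩
      rw [hr] at he
      by_contra hq
      have hne : (⟨q, h⟩ : Fin k) ≠ p := fun hh => hq (by simpa using congrArg Fin.val hh)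
      exact absurd he (Nat.ne_of_gt (hp _ hne))
    · rintro rfl
      exact ⟨p.2, by rw [hr]⟩
  rw [keyN, hset, csInf_singleton, hr]

lemma keyN_lt (hk : 0 < k) (e : Fin k → ℕ) (hb : ∀ i, e i ≤ n) :
    keyN k e < k * (n + 1) := by
  have h0 : (⟨0, hk⟩ : Fin k) ∈ Set.univ := trivial
  have hmem : sInf (Set.range e) ∈ Set.range e :=
    Nat.sInf_mem ⟨e ⟨0, hk⟩, ⟨0, hk⟩, rfl⟩
  obtain ⟨q, hq⟩ := hmem
  have hc : sInf (Set.range e) ≤ n := by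
    calc sInf (Set.range e) ≤ e ⟨0, hk⟩ := Nat.sInf_le ⟨⟨0, hk⟩, rfl⟩
    _ ≤ n := hb _
  have hs : sInf {p : ℕ | ∃ h : p < k, e ⟨p, h⟩ = sInf (Set.range e)} ≤ q.1 :=
    Nat.sInf_le ⟨q.2, by simpa using hq⟩
  have hq1 : q.1 < k := q.2
  rw [keyN]
  calc k * sInf (Set.range e) + sInf {p : ℕ | ∃ h : p < k, e ⟨p, h⟩ = sInf (Set.range e)}
      < k * sInf (Set.range e) + k := by omega
    _ ≤ k * n + k := by
        have : k * sInf (Set.range e) ≤ k * n := Nat.mul_le_mul_left _ hc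
        omega
    _ = k * (n + 1) := by ring

lemma gfun_lt (hk : 0 < k) {e₁ e₂ : Fin k → ℕ} (hb₁ : ∀ i, e₁ i ≤ n) (hb₂ : ∀ i, e₂ i ≤ n)
    (h : keyN k e₁ < keyN k e₂) : gfun k n e₁ < gfun k n e₂ := by
  show min ((keyN k e₁ : ℝ) / (k * (n + 1))) 1 < min ((keyN k e₂ : ℝ) / (k * (n + 1))) 1
  have hD : (0:ℝ) < (k : ℝ) * (n + 1) := by positivity
  have h₁ : ((keyN k e₁ : ℝ)) / ((k:ℝ) * (n+1)) ≤ 1 := by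
    rw [div_le_one hD]
    exact_mod_cast (keyN_lt hk e₁ hb₁).le
  have h₂ : ((keyN k e₂ : ℝ)) / ((k:ℝ) * (n+1)) ≤ 1 := by
    rw [div_le_one hD]
    exact_mod_cast (keyN_lt hk e₂ hb₂).le
  rw [min_eq_left h₁, min_eq_left h₂]
  gcongr



def cellI (n c : ℕ) : Set I := {t : I | ⌊(n:ℝ) * (t:ℝ)⌋₊ = c}

lemma measurableSet_cellI (n c : ℕ) : MeasurableSet (cellI n c) :=
  (measurable_const.mul measurable_subtype_coe).nat_floor (measurableSet_singleton c)

lemma floor_le_n (t : I) : ⌊(n:ℝ) * (t:ℝ)⌋₊ ≤ n := by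
  have h1 : (n:ℝ) * (t : ℝ) ≤ (n : ℝ) := mul_le_of_le_one_right (Nat.cast_nonneg n) t.2.2
  calc ⌊(n:ℝ)*(t:ℝ)⌋₊ ≤ ⌊(n:ℝ)⌋₊ := Nat.floor_mono h1
    _ = n := Nat.floor_natCast n

lemma volume_cellI (hn : 0 < n) (c : ℕ) : (volume : Measure I) (cellI n c) ≤ (n : ℝ≥0∞)⁻¹ := by
  have hvol : (volume : Measure I) (cellI n c) = volume (Subtype.val '' cellI n c) := by
    rw [unitInterval.volume_def]
    exact comap_subtype_coe_apply measurableSet_Icc _ _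
  rw [hvol]
  have hsub : Subtype.val '' cellI n c ⊆ Set.Ico ((c:ℝ)/n) (((c:ℝ)+1)/n) := by
    rintro x ⟨t, ht, rfl⟩
    have hnn : (0:ℝ) ≤ (n:ℝ) * (t:ℝ) := by
      have := t.2.1; positivity
    have h := (Nat.floor_eq_iff hnn).1 ht
    have hn' : (0:ℝ) < n := by exact_mod_cast hn
    constructor
    · rw [div_le_iff₀ hn']
      calc (c:ℝ) ≤ (n:ℝ) * t := h.1
        _ = (t:ℝ) * n := mul_comm _ _
    · rw [lt_div_iff₀ hn']
      calc (t:ℝ) * n = (n:ℝ) * t := mul_comm _ _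
        _ < (c:ℝ) + 1 := h.2
  calc volume (Subtype.val '' cellI n c) ≤ volume (Set.Ico ((c:ℝ)/n) (((c:ℝ)+1)/n)) :=
        measure_mono hsub
    _ = ENNReal.ofReal (((c:ℝ)+1)/n - (c:ℝ)/n) := Real.volume_Ico
    _ = ENNReal.ofReal ((n:ℝ)⁻¹) := by
        congr 1
        field_simp
        ring
    _ = (n : ℝ≥0∞)⁻¹ := by
        rw [ENNReal.ofReal_inv_of_pos (by exact_mod_cast hn), ENNReal.ofReal_natCast]

lemma sum_volume_cellI (hn : 0 < n) :
    ∑ c ∈ Finset.range (n+1), (volume : Measure I) (cellI n c) ≤ 1 := by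
  have hdisj : (↑(Finset.range (n+1)) : Set ℕ).PairwiseDisjoint (cellI n) := by
    intro a _ b _ hab
    refine Set.disjoint_left.2 fun t hta htb => hab ?_
    exact hta.symm.trans htb
  rw [← measure_biUnion_finset hdisj (fun c _ => measurableSet_cellI n c)]
  exact prob_le_one

lemma pair_le (hn : 0 < n) (i j : Fin (k+1)) (hij : i ≠ j) :
    Measure.pi (fun _ : Fin (k+1) => (volume : Measure I))
      {y : Fin (k+1) → I | ⌊(n:ℝ) * (y i : ℝ)⌋₊ = ⌊(n:ℝ) * (y j : ℝ)⌋₊}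
      ≤ (n : ℝ≥0∞)⁻¹ := by
  classical
  set π := Measure.pi (fun _ : Fin (k+1) => (volume : Measure I)) with hπ
  have hsub : {y : Fin (k+1) → I | ⌊(n:ℝ) * (y i : ℝ)⌋₊ = ⌊(n:ℝ) * (y j : ℝ)⌋₊} ⊆
      ⋃ c ∈ Finset.range (n+1),
        ((fun y : Fin (k+1) → I => y i) ⁻¹' cellI n c ∩ (fun y => y j) ⁻¹' cellI n c) := by
    intro y hy
    refine Set.mem_biUnion (Finset.mem_range.2 (Nat.lt_succ_of_le (floor_le_n (y i)))) ?_
    exact ⟨rfl, hy.symm⟩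
  have hrect : ∀ c : ℕ,
      π ((fun y : Fin (k+1) → I => y i) ⁻¹' cellI n c ∩ (fun y => y j) ⁻¹' cellI n c)
        = volume (cellI n c) * volume (cellI n c) := by
    intro c
    set t : Fin (k+1) → Set I :=
      fun l => if l = i then cellI n c else if l = j then cellI n c else univ with ht
    have hset : ((fun y : Fin (k+1) → I => y i) ⁻¹' cellI n c ∩ (fun y => y j) ⁻¹' cellI n c)
        = Set.pi univ t := by
      ext y
      constructor
      · rintro ⟨h1, h2⟩ l _
        by_cases hli : l = i
        · subst hli; simpa [ht] using h1
        · by_cases hlj : l = j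
          · subst hlj; simpa [ht, hli] using h2
          · simp [ht, hli, hlj]
      · intro h
        refine ⟨?_, ?_⟩
        · have := h i (mem_univ i); simpa [ht] using this
        · have := h j (mem_univ j); simpa [ht, hij.symm] using this
    rw [hset, hπ, Measure.pi_pi]
    rw [← Finset.mul_prod_erase Finset.univ _ (Finset.mem_univ i),
        ← Finset.mul_prod_erase _ _ (Finset.mem_erase.2 ⟨hij.symm, Finset.mem_univ j⟩)]
    have h1 : t i = cellI n c := by simp [ht]
    have h2 : t j = cellI n c := by simp [ht, hij.symm]
    have h3 : ∏ l ∈ (Finset.univ.erase i).erase j, volume (t l) = 1 := by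
      apply Finset.prod_eq_one
      intro l hl
      have hlj := (Finset.mem_erase.1 hl).1
      have hli := (Finset.mem_erase.1 (Finset.mem_erase.1 hl).2).1
      simp [ht, hli, hlj]
    rw [h1, h2, h3, mul_one]
  calc π {y : Fin (k+1) → I | ⌊(n:ℝ) * (y i : ℝ)⌋₊ = ⌊(n:ℝ) * (y j : ℝ)⌋₊}
      ≤ π (⋃ c ∈ Finset.range (n+1),
        ((fun y : Fin (k+1) → I => y i) ⁻¹' cellI n c ∩ (fun y => y j) ⁻¹' cellI n c)) :=
        measure_mono hsub
    _ ≤ ∑ c ∈ Finset.range (n+1),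
        π ((fun y : Fin (k+1) → I => y i) ⁻¹' cellI n c ∩ (fun y => y j) ⁻¹' cellI n c) :=
        measure_biUnion_finset_le _ _
    _ = ∑ c ∈ Finset.range (n+1), volume (cellI n c) * volume (cellI n c) := by
        exact Finset.sum_congr rfl fun c _ => hrect c
    _ ≤ ∑ c ∈ Finset.range (n+1), (n : ℝ≥0∞)⁻¹ * volume (cellI n c) := by
        refine Finset.sum_le_sum fun c _ => ?_
        exact mul_le_mul_left (volume_cellI hn c) _
    _ = (n : ℝ≥0∞)⁻¹ * ∑ c ∈ Finset.range (n+1), volume (cellI n c) := by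
        rw [Finset.mul_sum]
    _ ≤ (n : ℝ≥0∞)⁻¹ * 1 := mul_le_mul_right (sum_volume_cellI hn) _
    _ = (n : ℝ≥0∞)⁻¹ := mul_one _


lemma main_lt (hk : 0 < k) (y : Fin (k+1) → I) (m : Fin (k+1)) (hm : m ≠ 0)
    (hmin : ∀ i, i ≠ m → y m < y i)
    (hD : ∀ i j : Fin (k+1), i ≠ j → ⌊(n:ℝ) * (y i : ℝ)⌋₊ ≠ ⌊(n:ℝ) * (y j : ℝ)⌋₊) :
    fA k n (fun i => y i.succ) < fA k n (fun i => y i.castSucc) := by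
  set F : Fin (k+1) → ℕ := fun i => ⌊(n:ℝ) * (y i : ℝ)⌋₊ with hF
  have hFb : ∀ i, F i ≤ n := by
    intro i
    have h1 : (n:ℝ) * (y i : ℝ) ≤ (n : ℝ) :=
      mul_le_of_le_one_right (Nat.cast_nonneg n) (y i).2.2
    calc ⌊(n:ℝ)*(y i:ℝ)⌋₊ ≤ ⌊(n:ℝ)⌋₊ := Nat.floor_mono h1
      _ = n := Nat.floor_natCast n
  have hFlt : ∀ i, i ≠ m → F m < F i := by
    intro i hi
    have hle : F m ≤ F i := by
      apply Nat.floor_mono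
      have h2 : (y m : ℝ) ≤ (y i : ℝ) := by exact_mod_cast (hmin i hi).le
      exact mul_le_mul_of_nonneg_left h2 (Nat.cast_nonneg n)
    exact lt_of_le_of_ne hle (hD m i (fun h => hi h.symm))
  have hm1 : 1 ≤ (m:ℕ) := by
    have : (m:ℕ) ≠ 0 := fun h => hm (Fin.ext (by simp [h]))
    omega
  have hbnd₁ : ∀ i : Fin k, F i.castSucc ≤ n := fun i => hFb _
  have hbnd₂ : ∀ i : Fin k, F i.succ ≤ n := fun i => hFb _
  rw [show fA k n (fun i => y i.succ) = gfun k n (fun i : Fin k => F i.succ) from rfl,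
      show fA k n (fun i => y i.castSucc) = gfun k n (fun i : Fin k => F i.castSucc) from rfl]
  apply gfun_lt hk hbnd₂ hbnd₁
  by_cases hc : (m:ℕ) < k
  · -- interior case
    set p₁ : Fin k := ⟨m.1, hc⟩ with hp₁def
    have hp₁ : p₁.castSucc = m := by ext; simp [hp₁def]
    set p₂ : Fin k := ⟨m.1 - 1, by omega⟩ with hp₂def
    have hp₂ : p₂.succ = m := by ext; simp [hp₂def, Fin.val_succ]; omega
    have k₁ : keyN k (fun i : Fin k => F i.castSucc) = k * F m + m.1 := by
      have h := keyN_eq (fun i : Fin k => F i.castSucc) p₁ ?_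
      · rw [h, hp₁]
      · intro i hi
        show F p₁.castSucc < F i.castSucc
        rw [hp₁]
        exact hFlt _ (fun h => hi (Fin.castSucc_injective _ (h.trans hp₁.symm)))
    have k₂ : keyN k (fun i : Fin k => F i.succ) = k * F m + (m.1 - 1) := by
      have h := keyN_eq (fun i : Fin k => F i.succ) p₂ ?_
      · rw [h, hp₂]
      · intro i hi
        show F p₂.succ < F i.succ
        rw [hp₂]
        exact hFlt _ (fun h => hi (Fin.succ_injective _ (h.trans hp₂.symm)))
    rw [k₁, k₂]
    omega
  · -- m = last
    have hmk : (m:ℕ) = k := by have := m.2; omega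
    set p₂ : Fin k := ⟨k-1, by omega⟩ with hp₂def
    have hp₂ : p₂.succ = m := by ext; simp [hp₂def, Fin.val_succ]; omega
    have k₂ : keyN k (fun i : Fin k => F i.succ) = k * F m + (k - 1) := by
      have h := keyN_eq (fun i : Fin k => F i.succ) p₂ ?_
      · rw [h, hp₂]
      · intro i hi
        show F p₂.succ < F i.succ
        rw [hp₂]
        exact hFlt _ (fun h => hi (Fin.succ_injective _ (h.trans hp₂.symm)))
    have hmem : sInf (Set.range (fun i : Fin k => F i.castSucc)) ∈
        Set.range (fun i : Fin k => F i.castSucc) :=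
      Nat.sInf_mem ⟨F (Fin.castSucc ⟨0, hk⟩), ⟨0, hk⟩, rfl⟩
    obtain ⟨q, hq⟩ := hmem
    have hqm : q.castSucc ≠ m := by
      intro h
      have := congrArg Fin.val h
      simp [hmk] at this
      exact absurd q.2 (by omega)
    have h1 : F m + 1 ≤ sInf (Set.range (fun i : Fin k => F i.castSucc)) := by
      rw [← hq]; exact hFlt _ hqm
    calc keyN k (fun i : Fin k => F i.succ) = k * F m + (k-1) := k₂
      _ < k * F m + k := by omega
      _ = k * (F m + 1) := by ring
      _ ≤ k * sInf (Set.range (fun i : Fin k => F i.castSucc)) := Nat.mul_le_mul_left _ h1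
      _ ≤ keyN k (fun i : Fin k => F i.castSucc) := Nat.le_add_right _ _


lemma mp_comp (e : Fin (k+1) ≃ Fin (k+1)) :
    MeasurePreserving (fun (y : Fin (k+1) → I) i => y (e i))
      (Measure.pi fun _ : Fin (k+1) => (volume : Measure I))
      (Measure.pi fun _ : Fin (k+1) => (volume : Measure I)) := by
  have h := measurePreserving_piCongrLeft (fun _ : Fin (k+1) => (volume : Measure I)) e.symm
  have hfun : (fun (y : Fin (k+1) → I) i => y (e i)) =
      ⇑(MeasurableEquiv.piCongrLeft (fun _ : Fin (k+1) => I) e.symm) := by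
    funext y i
    rw [MeasurableEquiv.coe_piCongrLeft]
    have h2 := Equiv.piCongrLeft_apply_apply (fun _ : Fin (k+1) => I) e.symm y (e i)
    simpa using h2.symm
  rw [hfun]
  exact h

def Emin (k : ℕ) (m : Fin (k+1)) : Set (Fin (k+1) → I) := {y | ∀ i, i ≠ m → y m < y i}

lemma measurableSet_Emin (m : Fin (k+1)) : MeasurableSet (Emin k m) := by
  have h : Emin k m = ⋂ i, ⋂ (_ : i ≠ m), {y : Fin (k+1) → I | y m < y i} := by
    ext y; simp [Emin]
  rw [h]
  exact MeasurableSet.iInter fun i => MeasurableSet.iInter fun _ =>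
    measurableSet_lt (measurable_pi_apply m) (measurable_pi_apply i)

lemma pi_Emin_eq (m : Fin (k+1)) :
    Measure.pi (fun _ : Fin (k+1) => (volume : Measure I)) (Emin k m) =
    Measure.pi (fun _ : Fin (k+1) => (volume : Measure I)) (Emin k 0) := by
  set e := Equiv.swap (0 : Fin (k+1)) m with he
  have hmp := mp_comp e
  have hclaim : (fun (y : Fin (k+1) → I) i => y (e i)) ⁻¹' (Emin k 0) = Emin k m := by
    ext y
    constructor
    · intro h i' hi'
      have h0 : e i' ≠ 0 := by
        intro hcon
        apply hi'
        have h5 : e (e 0) = (0 : Fin (k+1)) := by rw [he, Equiv.swap_apply_self]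
        have h6 : e i' = e (e 0) := by rw [h5]; exact hcon
        have h7 := e.injective h6
        rw [he, Equiv.swap_apply_left] at h7
        exact h7
      have := h (e i') h0
      simpa [he, Equiv.swap_apply_left, Equiv.swap_apply_self] using this
    · intro h i hi
      show y (e 0) < y (e i)
      rw [he, Equiv.swap_apply_left]
      have hm : e i ≠ m := by
        intro hcon
        apply hi
        have := congrArg e hcon
        rw [Equiv.swap_apply_self] at this
        rw [this, he, Equiv.swap_apply_right]
      exact h (e i) hm
  rw [← hclaim]
  exact hmp.measure_preimage (measurableSet_Emin 0).nullMeasurableSet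

open Fin.NatCast Fin.CommRing in
lemma upper_bound (hk : 0 < k) (f : (Fin k → I) → I) (hf : Measurable f) :
    Measure.pi (fun _ : Fin (k+1) => (volume : Measure I))
      {y : Fin (k+1) → I | f (fun i => y i.succ) < f (fun i => y i.castSucc)}
      ≤ 1 - 1 / ((k : ℝ≥0∞) + 1) := by
  set π := Measure.pi (fun _ : Fin (k+1) => (volume : Measure I)) with hπ
  set w : Fin (k+1) → (Fin (k+1) → I) → (Fin k → I) :=
    fun j y i => y (j + i.castSucc) with hw
  set B : Fin (k+1) → Set (Fin (k+1) → I) :=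
    fun j => {y | f (w (j+1) y) < f (w j y)} with hB
  have hone : ∀ i : Fin k, (1 : Fin (k+1)) + i.castSucc = i.succ := by
    intro i
    ext
    rw [Fin.add_def]
    have h1 : (1 : Fin (k+1)).val = 1 := by
      rw [Fin.val_one']
      exact Nat.mod_eq_of_lt (by omega)
    rw [h1, Fin.coe_castSucc, Fin.val_succ]
    have hi := i.isLt
    show (1 + (i:ℕ)) % (k+1) = (i:ℕ) + 1
    rw [Nat.mod_eq_of_lt (by omega)]
    omega
  have hB0 : {y : Fin (k+1) → I | f (fun i => y i.succ) < f (fun i => y i.castSucc)} = B 0 := by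
    ext y
    have e1 : (fun i : Fin k => y i.succ) = w (0+1) y := by
      funext i
      rw [hw]
      simp only [zero_add]
      rw [hone i]
    have e2 : (fun i : Fin k => y i.castSucc) = w 0 y := by
      funext i
      rw [hw]
      simp only [zero_add]
    simp only [hB, Set.mem_setOf_eq, e1, e2]
  have hmeasB : ∀ j, MeasurableSet (B j) := by
    intro j
    exact measurableSet_lt
      (hf.comp (measurable_pi_lambda _ fun i => measurable_pi_apply _))
      (hf.comp (measurable_pi_lambda _ fun i => measurable_pi_apply _))
  have hrot : ∀ j, π (B j) = π (B 0) := by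
    intro j
    have hmp := mp_comp (Equiv.addRight j)
    have hclaim : (fun (y : Fin (k+1) → I) i => y (Equiv.addRight j i)) ⁻¹' (B 0) = B j := by
      ext y
      simp only [hB, Set.mem_preimage, Set.mem_setOf_eq]
      have e1 : w (0+1) (fun i => y (Equiv.addRight j i)) = w (j+1) y := by
        funext i
        simp only [hw, Equiv.coe_addRight]
        exact congrArg y (by ring)
      have e2 : w 0 (fun i => y (Equiv.addRight j i)) = w j y := by
        funext i
        simp only [hw, Equiv.coe_addRight]
        exact congrArg y (by ring)
      rw [e1, e2]
    rw [← hclaim]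
    exact hmp.measure_preimage (hmeasB 0).nullMeasurableSet
  have hempty : ⋂ j, B j = ∅ := by
    by_contra hne
    obtain ⟨y, hy⟩ := Set.nonempty_iff_ne_empty.2 hne
    simp only [Set.mem_iInter] at hy
    have hy' : ∀ j : Fin (k+1), f (w (j+1) y) < f (w j y) := fun j => hy j
    have hchain : ∀ p : ℕ, f (w ((p : Fin (k+1)) + 1) y) < f (w 0 y) := by
      intro p
      induction p with
      | zero => simpa using hy' 0
      | succ q ih =>
        have h1 := hy' ((q : Fin (k+1)) + 1)
        have hcast : ((q+1 : ℕ) : Fin (k+1)) = (q : Fin (k+1)) + 1 := by push_cast; ring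
        rw [hcast]
        exact lt_trans h1 ih
    have hk1 : ((k : Fin (k+1)) : Fin (k+1)) + 1 = 0 := by
      have : ((k+1 : ℕ) : Fin (k+1)) = 0 := by
        simp [Fin.natCast_self]
      rw [← this]; push_cast; ring
    have := hchain k
    rw [hk1] at this
    exact lt_irrefl _ this
  have hIsProb : IsProbabilityMeasure π := by rw [hπ]; infer_instance
  have h1 : (1:ℝ≥0∞) ≤ ((k : ℝ≥0∞)+1) * (1 - π (B 0)) := by
    have hcompl : (univ : Set (Fin (k+1) → I)) = ⋃ j, (B j)ᶜ := by
      rw [← Set.compl_iInter, hempty, Set.compl_empty]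
    calc (1:ℝ≥0∞) = π univ := measure_univ.symm
      _ = π (⋃ j, (B j)ᶜ) := by rw [← hcompl]
      _ ≤ ∑' j : Fin (k+1), π ((B j)ᶜ) := measure_iUnion_le _
      _ = ∑' _j : Fin (k+1), (1 - π (B 0)) := by
          congr 1
          funext j
          rw [prob_compl_eq_one_sub (hmeasB j), hrot j]
      _ = ((k : ℝ≥0∞)+1) * (1 - π (B 0)) := by
          rw [tsum_fintype, Finset.sum_const, Finset.card_univ, Fintype.card_fin, nsmul_eq_mul]
          push_cast
          ring
  have h2 : 1 / ((k:ℝ≥0∞)+1) ≤ 1 - π (B 0) := ENNReal.div_le_of_le_mul' h1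
  have h3 : π (B 0) ≤ 1 - 1/((k:ℝ≥0∞)+1) := by
    have hp1 : π (B 0) ≤ 1 := prob_le_one
    have h4 := tsub_le_tsub_left h2 1
    rwa [ENNReal.sub_sub_cancel one_ne_top hp1] at h4
  rw [hB0]
  exact h3


lemma lower_bound (hk : 0 < k) (hn : 0 < n) :
    1 - 1 / ((k : ℝ≥0∞) + 1) ≤
      Measure.pi (fun _ : Fin (k+1) => (volume : Measure I))
        {y : Fin (k+1) → I | fA k n (fun i => y i.succ) < fA k n (fun i => y i.castSucc)}
      + 2 * (((k : ℝ≥0∞)+1)^2 * (n : ℝ≥0∞)⁻¹) := by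
  classical
  set π := Measure.pi (fun _ : Fin (k+1) => (volume : Measure I)) with hπ
  haveI : IsProbabilityMeasure π := by rw [hπ]; infer_instance
  set B : Set (Fin (k+1) → I) :=
    {y : Fin (k+1) → I | fA k n (fun i => y i.succ) < fA k n (fun i => y i.castSucc)} with hB
  set D : Set (Fin (k+1) → I) :=
    ⋃ i, ⋃ j, ⋃ (_ : i ≠ j),
      {y : Fin (k+1) → I | ⌊(n:ℝ) * (y i : ℝ)⌋₊ = ⌊(n:ℝ) * (y j : ℝ)⌋₊} with hD
  set a := π (Emin k 0) with ha
  -- bound on D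
  have hDle : π D ≤ ((k:ℝ≥0∞)+1)^2 * (n : ℝ≥0∞)⁻¹ := by
    have h1 : π D ≤ ∑' i : Fin (k+1), ∑' j : Fin (k+1), (n : ℝ≥0∞)⁻¹ := by
      refine le_trans (measure_iUnion_le _) ?_
      refine ENNReal.tsum_le_tsum fun i => ?_
      refine le_trans (measure_iUnion_le _) ?_
      refine ENNReal.tsum_le_tsum fun j => ?_
      by_cases hij : i = j
      · subst hij
        simp
      · refine le_trans (measure_mono (Set.iUnion_subset fun _ => subset_rfl)) ?_
        exact pair_le hn i j hij
    calc π D ≤ ∑' i : Fin (k+1), ∑' j : Fin (k+1), (n : ℝ≥0∞)⁻¹ := h1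
      _ = ((k:ℝ≥0∞)+1)^2 * (n : ℝ≥0∞)⁻¹ := by
          rw [tsum_fintype]
          simp only [tsum_fintype, Finset.sum_const, Finset.card_univ, Fintype.card_fin,
            nsmul_eq_mul]
          push_cast
          ring
  have hEmeas : ∀ m : Fin (k+1), MeasurableSet (Emin k m) := measurableSet_Emin
  have hEdisj : Pairwise (Function.onFun Disjoint (Emin k)) := by
    intro p q hpq
    refine Set.disjoint_left.2 fun y hyp hyq => ?_
    exact lt_asymm (hyp q hpq.symm) (hyq p hpq)
  -- cover
  have hcover : (univ : Set (Fin (k+1) → I)) ⊆ (⋃ m, Emin k m) ∪ D := by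
    intro y _
    obtain ⟨m, -, hmle⟩ := Finset.exists_min_image Finset.univ y ⟨0, Finset.mem_univ 0⟩
    by_cases hstrict : ∀ i, i ≠ m → y m < y i
    · exact Or.inl (Set.mem_iUnion.2 ⟨m, hstrict⟩)
    · push_neg at hstrict
      obtain ⟨i, hi, hnlt⟩ := hstrict
      have heq : y i = y m := le_antisymm hnlt (hmle i (Finset.mem_univ i))
      refine Or.inr ?_
      refine Set.mem_iUnion.2 ⟨i, Set.mem_iUnion.2 ⟨m, Set.mem_iUnion.2 ⟨hi, ?_⟩⟩⟩
      show ⌊(n:ℝ) * (y i : ℝ)⌋₊ = ⌊(n:ℝ) * (y m : ℝ)⌋₊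
      rw [heq]
  have h1 : (1:ℝ≥0∞) ≤ ((k:ℝ≥0∞)+1) * a + π D := by
    have hU : π (⋃ m, Emin k m) = ((k:ℝ≥0∞)+1) * a := by
      rw [measure_iUnion hEdisj hEmeas]
      calc ∑' m : Fin (k+1), π (Emin k m) = ∑' _m : Fin (k+1), a := by
            congr 1; funext m; rw [ha, pi_Emin_eq m]
        _ = ((k:ℝ≥0∞)+1) * a := by
            rw [tsum_fintype, Finset.sum_const, Finset.card_univ, Fintype.card_fin, nsmul_eq_mul]
            push_cast; ring
    calc (1:ℝ≥0∞) = π univ := measure_univ.symm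
      _ ≤ π ((⋃ m, Emin k m) ∪ D) := measure_mono hcover
      _ ≤ π (⋃ m, Emin k m) + π D := measure_union_le _ _
      _ = ((k:ℝ≥0∞)+1) * a + π D := by rw [hU]
  -- success superset
  have hEsub : (⋃ m, ⋃ (_ : m ≠ 0), Emin k m) ⊆ B ∪ D := by
    intro y hy
    obtain ⟨m, hm⟩ := Set.mem_iUnion.1 hy
    obtain ⟨hm0, hymem⟩ := Set.mem_iUnion.1 hm
    by_cases hyD : y ∈ D
    · exact Or.inr hyD
    · refine Or.inl ?_
      have hDhyp : ∀ i j : Fin (k+1), i ≠ j →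
          ⌊(n:ℝ) * (y i : ℝ)⌋₊ ≠ ⌊(n:ℝ) * (y j : ℝ)⌋₊ := by
        intro i j hij hcon
        exact hyD (Set.mem_iUnion.2 ⟨i, Set.mem_iUnion.2 ⟨j, Set.mem_iUnion.2 ⟨hij, hcon⟩⟩⟩)
      exact main_lt hk y m hm0 hymem hDhyp
  have h2 : (k:ℝ≥0∞) * a ≤ π B + π D := by
    have hU2 : π (⋃ m, ⋃ (_ : m ≠ 0), Emin k m) = (k:ℝ≥0∞) * a := by
      have hset : (⋃ m, ⋃ (_ : m ≠ 0), Emin k m) = ⋃ m ∈ Finset.univ.erase (0 : Fin (k+1)), Emin k m := by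
        ext y; simp [Finset.mem_erase]
      rw [hset, measure_biUnion_finset ?_ (fun b _ => hEmeas b)]
      · calc ∑ m ∈ Finset.univ.erase (0 : Fin (k+1)), π (Emin k m)
            = ∑ _m ∈ Finset.univ.erase (0 : Fin (k+1)), a := by
              refine Finset.sum_congr rfl fun m _ => ?_
              rw [ha, pi_Emin_eq m]
          _ = (k:ℝ≥0∞) * a := by
              rw [Finset.sum_const, Finset.card_erase_of_mem (Finset.mem_univ _),
                Finset.card_univ, Fintype.card_fin, nsmul_eq_mul]
              norm_num
      · intro p hp q hq hpq
        exact hEdisj hpq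
    calc (k:ℝ≥0∞) * a = π (⋃ m, ⋃ (_ : m ≠ 0), Emin k m) := hU2.symm
      _ ≤ π (B ∪ D) := measure_mono hEsub
      _ ≤ π B + π D := measure_union_le _ _
  -- conclude
  have hk1ne0 : ((k:ℝ≥0∞)+1) ≠ 0 := by
    intro h
    simpa using (add_eq_zero.1 h).2
  have hk1netop : ((k:ℝ≥0∞)+1) ≠ ∞ :=
    ENNReal.add_ne_top.2 ⟨ENNReal.natCast_ne_top k, one_ne_top⟩
  have hfrac : (1:ℝ≥0∞) - 1/((k:ℝ≥0∞)+1) = (k:ℝ≥0∞)/((k:ℝ≥0∞)+1) := by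
    apply ENNReal.sub_eq_of_eq_add
    · exact (ENNReal.div_lt_top one_ne_top hk1ne0).ne
    · rw [ENNReal.div_add_div_same, ENNReal.div_self hk1ne0 hk1netop]
  have hDle2 : π D ≤ 2 * (((k:ℝ≥0∞)+1)^2 * (n : ℝ≥0∞)⁻¹) := by
    calc π D ≤ ((k:ℝ≥0∞)+1)^2 * (n : ℝ≥0∞)⁻¹ := hDle
      _ ≤ 2 * (((k:ℝ≥0∞)+1)^2 * (n : ℝ≥0∞)⁻¹) := le_mul_of_one_le_left zero_le one_le_two
  rw [hfrac]
  by_cases hcase : 1/((k:ℝ≥0∞)+1) ≤ a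
  · calc (k:ℝ≥0∞)/((k:ℝ≥0∞)+1) = (k:ℝ≥0∞) * (1/((k:ℝ≥0∞)+1)) := by
          rw [mul_one_div]
      _ ≤ (k:ℝ≥0∞) * a := mul_le_mul_right hcase _
      _ ≤ π B + π D := h2
      _ ≤ π B + 2 * (((k:ℝ≥0∞)+1)^2 * (n : ℝ≥0∞)⁻¹) := add_le_add_right hDle2 _
  · push_neg at hcase
    have hδ : (1:ℝ≥0∞) - ((k:ℝ≥0∞)+1) * a ≤ π D := by
      rw [tsub_le_iff_right]
      calc (1:ℝ≥0∞) ≤ ((k:ℝ≥0∞)+1) * a + π D := h1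
        _ = π D + ((k:ℝ≥0∞)+1) * a := add_comm _ _
    have hstep : (1:ℝ≥0∞) - a ≤ (k:ℝ≥0∞) * a + ((1:ℝ≥0∞) - ((k:ℝ≥0∞)+1) * a) := by
      rw [tsub_le_iff_right]
      have hx : (k:ℝ≥0∞) * a + ((1:ℝ≥0∞) - ((k:ℝ≥0∞)+1) * a) + a
          = ((1:ℝ≥0∞) - ((k:ℝ≥0∞)+1) * a) + ((k:ℝ≥0∞)+1) * a := by
        generalize ((1:ℝ≥0∞) - ((k:ℝ≥0∞)+1) * a) = t
        ring
      rw [hx]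
      exact le_tsub_add
    calc (k:ℝ≥0∞)/((k:ℝ≥0∞)+1) = 1 - 1/((k:ℝ≥0∞)+1) := hfrac.symm
      _ ≤ 1 - a := tsub_le_tsub_left hcase.le 1
      _ ≤ (k:ℝ≥0∞) * a + ((1:ℝ≥0∞) - ((k:ℝ≥0∞)+1) * a) := hstep
      _ ≤ (k:ℝ≥0∞) * a + π D := add_le_add_right hδ _
      _ ≤ (π B + π D) + π D := add_le_add_left h2 _
      _ = π B + (π D + π D) := add_assoc _ _ _
      _ = π B + 2 * π D := by rw [two_mul]
      _ ≤ π B + 2 * (((k:ℝ≥0∞)+1)^2 * (n : ℝ≥0∞)⁻¹) :=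
          add_le_add_right (mul_le_mul_right hDle _) _


end Stmt3Aux

open Stmt3Aux in
/-- for the shift `τ(i) = i+1` on `S₀ = {1,…,k}`, the supremum over
measurable `f : [0,1]^k → [0,1]` of the measure of
`{x ∈ [0,1]^ℕ : f(x₁,…,x_k) > f(x₂,…,x_{k+1})}` equals `1 − 1/(k+1)`. -/
theorem stmt_3 (k : ℕ) (hk : 1 ≤ k)
    (μ : Measure (ℕ → I)) [IsProbabilityMeasure μ]
    (hμ : ∀ t : Finset ℕ,
      Measure.map (fun x (i : t) => x i) μ = Measure.pi fun _ : t => (volume : Measure I)) :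
    (⨆ (f : (Fin k → I) → I) (_ : Measurable f),
        μ {x : ℕ → I | f (fun i => x (i.1 + 1)) > f (fun i => x (i.1 + 2))}) =
      1 - 1 / ((k : ℝ≥0∞) + 1) := by
  classical
  have hk0 : 0 < k := hk
  set π := Measure.pi (fun _ : Fin (k+1) => (volume : Measure I)) with hπ
  have transfer : ∀ f : (Fin k → I) → I, Measurable f →
      μ {x : ℕ → I | f (fun i => x (i.1 + 1)) > f (fun i => x (i.1 + 2))} =
      π {y : Fin (k+1) → I | f (fun i => y i.succ) < f (fun i => y i.castSucc)} := by
    intro f hf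
    set t : Finset ℕ := Finset.Icc 1 (k+1) with ht
    have hmem : ∀ j : Fin (k+1), j.1 + 1 ∈ t := by
      intro j
      have := j.isLt
      simp only [ht, Finset.mem_Icc]
      omega
    set ψ : Fin (k+1) ≃ t :=
      { toFun := fun j => ⟨j.1+1, hmem j⟩
        invFun := fun s => ⟨s.1 - 1, by
          have := s.2
          simp only [ht, Finset.mem_Icc] at this
          omega⟩
        left_inv := by intro j; ext; simp
        right_inv := by
          intro s
          have := s.2
          simp only [ht, Finset.mem_Icc] at this
          ext
          simp
          omega } with hψ
    set S : Set (t → I) := {z | f (fun i => z (ψ i.succ)) < f (fun i => z (ψ i.castSucc))} with hS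
    have hSmeas : MeasurableSet S :=
      measurableSet_lt (hf.comp (measurable_pi_lambda _ fun i => measurable_pi_apply _))
        (hf.comp (measurable_pi_lambda _ fun i => measurable_pi_apply _))
    have hres : Measurable (fun (x : ℕ → I) (i : t) => x i) :=
      measurable_pi_lambda _ fun i => measurable_pi_apply _
    have hpre : {x : ℕ → I | f (fun i => x (i.1 + 1)) > f (fun i => x (i.1+2))} =
        (fun (x : ℕ → I) (i : t) => x i) ⁻¹' S := by
      ext x
      simp only [hS, Set.mem_setOf_eq, Set.mem_preimage, gt_iff_lt]
      have e1 : (fun i : Fin k => x ((ψ i.succ : t) : ℕ)) = fun i : Fin k => x (i.1+2) := by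
        funext i
        apply congrArg x
        show (i.succ).1 + 1 = i.1 + 2
        rw [Fin.val_succ]
      have e2 : (fun i : Fin k => x ((ψ i.castSucc : t) : ℕ)) = fun i : Fin k => x (i.1+1) := by
        funext i
        apply congrArg x
        show (i.castSucc).1 + 1 = i.1 + 1
        rw [Fin.coe_castSucc]
      rw [e1, e2]
    rw [hpre, ← Measure.map_apply hres hSmeas, hμ t]
    have hmp := measurePreserving_piCongrLeft (fun _ : t => (volume : Measure I)) ψ
    rw [← hmp.measure_preimage hSmeas.nullMeasurableSet]
    have hap : ∀ (y : Fin (k+1) → I) (j : Fin (k+1)),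
        (MeasurableEquiv.piCongrLeft (fun _ : t => I) ψ) y (ψ j) = y j := by
      intro y j
      rw [MeasurableEquiv.coe_piCongrLeft]
      exact Equiv.piCongrLeft_apply_apply (fun _ : t => I) ψ y j
    have hsets : (⇑(MeasurableEquiv.piCongrLeft (fun _ : t => I) ψ) ⁻¹' S) =
        {y : Fin (k+1) → I | f (fun i => y i.succ) < f (fun i => y i.castSucc)} := by
      ext y
      simp only [Set.mem_preimage, hS, Set.mem_setOf_eq]
      rw [show (fun i : Fin k => (MeasurableEquiv.piCongrLeft (fun _ : t => I) ψ) y (ψ i.succ))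
            = fun i : Fin k => y i.succ from funext fun i => hap y i.succ,
          show (fun i : Fin k => (MeasurableEquiv.piCongrLeft (fun _ : t => I) ψ) y (ψ i.castSucc))
            = fun i : Fin k => y i.castSucc from funext fun i => hap y i.castSucc]
    rw [hsets]
  apply le_antisymm
  · refine iSup₂_le fun f hf => ?_
    rw [transfer f hf]
    exact upper_bound hk0 f hf
  · apply ENNReal.le_of_forall_pos_le_add
    intro ε hε _hb
    set C : ℝ≥0∞ := 2 * (((k:ℝ≥0∞)+1)^2) with hC
    have hC0 : C ≠ 0 := by
      rw [hC]
      refine mul_ne_zero (by norm_num) (pow_ne_zero _ ?_)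
      intro h
      simpa using (add_eq_zero.1 h).2
    have hCtop : C ≠ ∞ := by
      rw [hC]
      exact ENNReal.mul_ne_top (by norm_num)
        (ENNReal.pow_ne_top (ENNReal.add_ne_top.2 ⟨ENNReal.natCast_ne_top k, one_ne_top⟩))
    have hεC : (ε : ℝ≥0∞)/C ≠ 0 := by
      simp only [ne_eq, ENNReal.div_eq_zero_iff, not_or]
      exact ⟨by exact_mod_cast hε.ne', hCtop⟩
    obtain ⟨n, hn⟩ := ENNReal.exists_inv_nat_lt hεC
    have hn0 : 0 < n := by
      rcases Nat.eq_zero_or_pos n with h | h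
      · subst h
        simp only [Nat.cast_zero, ENNReal.inv_zero] at hn
        exact absurd hn (not_top_lt)
      · exact h
    have hlow := lower_bound hk0 hn0
    have hfAeq := transfer (fA k n) (measurable_fA k n)
    have hle0 : μ {x : ℕ → I | fA k n (fun i => x (i.1 + 1)) > fA k n (fun i => x (i.1 + 2))}
        ≤ ⨆ (f : (Fin k → I) → I) (_ : Measurable f),
          μ {x : ℕ → I | f (fun i => x (i.1 + 1)) > f (fun i => x (i.1 + 2))} :=
      le_iSup₂ (f := fun (f : (Fin k → I) → I) (_ : Measurable f) =>
        μ {x : ℕ → I | f (fun i => x (i.1 + 1)) > f (fun i => x (i.1 + 2))})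
        (fA k n) (measurable_fA k n)
    have hle1 : π {y : Fin (k+1) → I | fA k n (fun i => y i.succ) < fA k n (fun i => y i.castSucc)}
        ≤ ⨆ (f : (Fin k → I) → I) (_ : Measurable f),
          μ {x : ℕ → I | f (fun i => x (i.1 + 1)) > f (fun i => x (i.1 + 2))} :=
      hfAeq ▸ hle0
    have hCn : 2 * (((k:ℝ≥0∞)+1)^2 * (n : ℝ≥0∞)⁻¹) ≤ (ε : ℝ≥0∞) := by
      have h1 : 2 * (((k:ℝ≥0∞)+1)^2 * (n : ℝ≥0∞)⁻¹) = C * (n : ℝ≥0∞)⁻¹ := by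
        rw [hC, mul_assoc]
      rw [h1]
      calc C * (n : ℝ≥0∞)⁻¹ ≤ C * ((ε : ℝ≥0∞)/C) := mul_le_mul_right hn.le _
        _ = (ε : ℝ≥0∞) := ENNReal.mul_div_cancel hC0 hCtop
    calc 1 - 1 / ((k : ℝ≥0∞) + 1)
        ≤ π {y : Fin (k+1) → I | fA k n (fun i => y i.succ) < fA k n (fun i => y i.castSucc)}
          + 2 * (((k:ℝ≥0∞)+1)^2 * (n : ℝ≥0∞)⁻¹) := hlow
      _ ≤ (⨆ (f : (Fin k → I) → I) (_ : Measurable f),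
            μ {x : ℕ → I | f (fun i => x (i.1 + 1)) > f (fun i => x (i.1 + 2))}) + (ε : ℝ≥0∞) :=
          add_le_add hle1 hCn
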